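/- Let N be a positive integer, κ₁ > 0 and κ₂ ∈ (−1/2, 1/2) with κ₂ ≠ 0, and let κ be the near-axis curvature model. Then 25 + 36κ₂ + 228κ₂² > 0, and a point ℓ ∈ (0, π/N) satisfies κ′(ℓ) = 0 if and only if cos²(Nℓ/2) = (−5 + 30κ₂ + √(25 + 36κ₂ + 228κ₂²)) / (56κ₂). In the case κ₂ = 0, a point ℓ ∈ (0, π/N) satisfies κ′(ℓ) = 0 if and only if cos²(Nℓ/2) = 3/5. -/

import Mathlib

/-!
Differentiating, `κ'(ℓ) = N κ₁ sin θ cos² θ · P(cos² θ)` with `θ = Nℓ/2` and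
`P(u) = 28κ₂u² + (5 − 30κ₂)u + (6κ₂ − 3)`. On `(0, π/N)` the prefactor is positive and
`cos² θ ∈ (0, 1)`, so the critical points are the roots of `P` in `(0, 1)`. Since
`P(0) = 6κ₂ − 3 < 0 < 4κ₂ + 2 = P(1)`, any such root `u` has `P'(u) > 0`, which singles out
the root `(−b + √(b² − 4ac)) / 2a` of the quadratic formula.
-/

open Real Set

lemma quadratic_deriv_pos_of_root_mem_Ioo {a b c u : ℝ} (hc : c < 0) (habc : 0 < a + b + c)
    (hu : u ∈ Ioo 0 1) (hroot : a * u ^ 2 + b * u + c = 0) : 0 < 2 * a * u + b := by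
  obtain ⟨hu0, hu1⟩ := hu
  by_contra! hderiv
  -- Expanding around the root, `P(1) > 0` forces `a > 0`, and then `P(0) > 0`.
  have hP1 : a + b + c = (2 * a * u + b) * (1 - u) + a * (1 - u) ^ 2 := by
    linear_combination hroot
  have hP0 : c = -(2 * a * u + b) * u + a * u ^ 2 := by linear_combination hroot
  have ha : 0 < a := by
    nlinarith [mul_nonpos_of_nonpos_of_nonneg hderiv (sub_nonneg.2 hu1.le)]
  nlinarith [mul_nonpos_of_nonpos_of_nonneg hderiv hu0.le]

lemma discrim_nonneg_of_sign_change {a b c : ℝ} (hc : c < 0) (habc : 0 < a + b + c) :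
    0 ≤ discrim a b c := by
  unfold discrim
  rcases le_or_gt 0 a with ha | ha
  · nlinarith [sq_nonneg b]
  · nlinarith [sq_nonneg (a - c)]

theorem quadratic_eq_zero_iff_of_sign_change {a b c u : ℝ} (ha : a ≠ 0) (hc : c < 0)
    (habc : 0 < a + b + c) (hu : u ∈ Ioo 0 1) :
    a * u ^ 2 + b * u + c = 0 ↔ u = (-b + √(discrim a b c)) / (2 * a) := by
  have hsqrt : discrim a b c = √(discrim a b c) * √(discrim a b c) :=
    (mul_self_sqrt (discrim_nonneg_of_sign_change hc habc)).symm
  rw [sq, quadratic_eq_zero_iff ha hsqrt]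
  refine ⟨fun hroots => ?_, Or.inl⟩
  have hroot : a * u ^ 2 + b * u + c = 0 := by
    rw [sq]; exact (quadratic_eq_zero_iff ha hsqrt u).2 hroots
  have hslope : √(discrim a b c) = 2 * a * u + b := by
    rw [discrim_eq_sq_of_quadratic_eq_zero (x := u) (by rw [← sq]; exact hroot),
      sqrt_sq (quadratic_deriv_pos_of_root_mem_Ioo hc habc hu hroot).le]
  field_simp
  linarith

noncomputable def nearAxisCurvature (N κ₁ κ₂ ℓ : ℝ) : ℝ :=
  2 * κ₁ * sin (N * ℓ / 2) ^ 2 * cos (N * ℓ / 2) ^ 3 * (1 + 2 * κ₂ * cos (N * ℓ))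

theorem hasDerivAt_nearAxisCurvature (N κ₁ κ₂ ℓ : ℝ) :
    HasDerivAt (nearAxisCurvature N κ₁ κ₂)
      (N * κ₁ * sin (N * ℓ / 2) * cos (N * ℓ / 2) ^ 2 *
        (28 * κ₂ * (cos (N * ℓ / 2) ^ 2) ^ 2 + (5 - 30 * κ₂) * cos (N * ℓ / 2) ^ 2
          + (6 * κ₂ - 3))) ℓ := by
  have hhalf : HasDerivAt (fun x : ℝ => N * x / 2) (N / 2) ℓ := by
    simpa using ((hasDerivAt_id ℓ).const_mul N).div_const 2
  have hfull : HasDerivAt (fun x : ℝ => N * x) N ℓ := by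
    simpa using (hasDerivAt_id ℓ).const_mul N
  have hsin := (hasDerivAt_sin _).comp ℓ hhalf
  have hcos := (hasDerivAt_cos _).comp ℓ hhalf
  have hcos_full := (hasDerivAt_cos _).comp ℓ hfull
  refine ((((hsin.pow 2).const_mul (2 * κ₁)).mul (hcos.pow 3)).mul
    ((hcos_full.const_mul (2 * κ₂)).const_add 1)).congr_deriv ?_
  have hcos_double : cos (N * ℓ) = 2 * cos (N * ℓ / 2) ^ 2 - 1 := by
    rw [← cos_two_mul]; ring_nf
  have hsin_double : sin (N * ℓ) = 2 * sin (N * ℓ / 2) * cos (N * ℓ / 2) := by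
    rw [← sin_two_mul]; ring_nf
  simp only [Function.comp_apply, Pi.pow_apply, Pi.mul_apply, hcos_double, hsin_double]
  linear_combination -(κ₁ * N * sin (N * ℓ / 2) * cos (N * ℓ / 2) ^ 2 *
    (3 - 6 * κ₂ + 20 * κ₂ * cos (N * ℓ / 2) ^ 2)) * sin_sq_add_cos_sq (N * ℓ / 2)

lemma mul_div_two_mem_Ioo {N ℓ : ℝ} (hN : 0 < N) (hℓ : ℓ ∈ Ioo 0 (π / N)) :
    N * ℓ / 2 ∈ Ioo 0 (π / 2) := by
  have hlt := mul_lt_mul_of_pos_left hℓ.2 hN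
  rw [mul_div_cancel₀ _ hN.ne'] at hlt
  exact ⟨by linarith [mul_pos hN hℓ.1], by linarith⟩

lemma sin_pos_of_mem_Ioo_pi_div_two {θ : ℝ} (hθ : θ ∈ Ioo 0 (π / 2)) : 0 < sin θ :=
  sin_pos_of_pos_of_lt_pi hθ.1 (by linarith [hθ.2, pi_pos])

lemma cos_pos_of_mem_Ioo_pi_div_two {θ : ℝ} (hθ : θ ∈ Ioo 0 (π / 2)) : 0 < cos θ :=
  cos_pos_of_mem_Ioo ⟨by linarith [hθ.1, pi_pos], hθ.2⟩

lemma sq_cos_mem_Ioo {θ : ℝ} (hθ : θ ∈ Ioo 0 (π / 2)) : cos θ ^ 2 ∈ Ioo 0 1 := by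
  have hsin := sin_pos_of_mem_Ioo_pi_div_two hθ
  have hcos := cos_pos_of_mem_Ioo_pi_div_two hθ
  exact ⟨by positivity, by nlinarith [sin_sq_add_cos_sq θ]⟩

theorem deriv_nearAxisCurvature_eq_zero_iff {N κ₁ κ₂ ℓ : ℝ} (hN : 0 < N) (hκ₁ : 0 < κ₁)
    (hℓ : ℓ ∈ Ioo 0 (π / N)) :
    deriv (nearAxisCurvature N κ₁ κ₂) ℓ = 0 ↔
      28 * κ₂ * (cos (N * ℓ / 2) ^ 2) ^ 2 + (5 - 30 * κ₂) * cos (N * ℓ / 2) ^ 2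
        + (6 * κ₂ - 3) = 0 := by
  have hθ := mul_div_two_mem_Ioo hN hℓ
  have hsin := sin_pos_of_mem_Ioo_pi_div_two hθ
  have hcos := cos_pos_of_mem_Ioo_pi_div_two hθ
  rw [(hasDerivAt_nearAxisCurvature N κ₁ κ₂ ℓ).deriv, mul_eq_zero,
    or_iff_right (by positivity)]

/-- For the near-axis curvature model, `25 + 36κ₂ + 228κ₂² > 0`; when
`κ₂ ≠ 0`, a point `ℓ ∈ (0, π/N)` is critical iff
`cos²(Nℓ/2) = (−5 + 30κ₂ + √(25 + 36κ₂ + 228κ₂²))/(56κ₂)`; when `κ₂ = 0`, a point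
`ℓ ∈ (0, π/N)` is critical iff `cos²(Nℓ/2) = 3/5`. -/
theorem near_axis_curvature_critical_point_characterization
    (N : ℕ) (hN : 0 < N) (κ₁ κ₂ : ℝ) (hκ₁ : 0 < κ₁)
    (hκ₂ : κ₂ ∈ Set.Ioo (-(1/2) : ℝ) (1/2))
    (κ : ℝ → ℝ)
    (hκ : ∀ ℓ : ℝ, κ ℓ =
      2 * κ₁ * Real.sin ((N : ℝ) * ℓ / 2) ^ 2 * Real.cos ((N : ℝ) * ℓ / 2) ^ 3 *
        (1 + 2 * κ₂ * Real.cos ((N : ℝ) * ℓ))) :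
    0 < 25 + 36 * κ₂ + 228 * κ₂ ^ 2 ∧
    (κ₂ ≠ 0 → ∀ ℓ ∈ Set.Ioo (0 : ℝ) (π / (N : ℝ)),
      (deriv κ ℓ = 0 ↔
        Real.cos ((N : ℝ) * ℓ / 2) ^ 2 =
          (-5 + 30 * κ₂ + Real.sqrt (25 + 36 * κ₂ + 228 * κ₂ ^ 2)) / (56 * κ₂))) ∧
    (κ₂ = 0 → ∀ ℓ ∈ Set.Ioo (0 : ℝ) (π / (N : ℝ)),
      (deriv κ ℓ = 0 ↔ Real.cos ((N : ℝ) * ℓ / 2) ^ 2 = 3 / 5)) := by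
  obtain ⟨hκ₂_lo, hκ₂_hi⟩ := hκ₂
  have hκ_eq : κ = nearAxisCurvature N κ₁ κ₂ := funext hκ
  have hcrit := fun ℓ (hℓ : ℓ ∈ Ioo 0 (π / N)) ↦
    hκ_eq ▸ deriv_nearAxisCurvature_eq_zero_iff (κ₂ := κ₂) (Nat.cast_pos.2 hN) hκ₁ hℓ
  refine ⟨by nlinarith [sq_nonneg (76 * κ₂ + 6)], fun hκ₂_ne ℓ hℓ ↦ ?_, fun hκ₂_zero ℓ hℓ ↦ ?_⟩
  · have hu := sq_cos_mem_Ioo (mul_div_two_mem_Ioo (Nat.cast_pos.2 hN) hℓ)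
    have hdiscrim : discrim (28 * κ₂) (5 - 30 * κ₂) (6 * κ₂ - 3)
        = 25 + 36 * κ₂ + 228 * κ₂ ^ 2 := by unfold discrim; ring
    rw [hcrit ℓ hℓ, quadratic_eq_zero_iff_of_sign_change (by positivity) (by linarith)
      (by linarith) hu, hdiscrim]
    congr! 1
    ring
  · rw [hcrit ℓ hℓ, hκ₂_zero]
    constructor <;> intro h <;> linarith
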